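/- arXiv:1708.09701 — 4 statements merged into one kernel-verified Lean document; each statement's English description precedes it below -/
import Mathlib

section
/- Let N ≥ 4, set 2* := 2N/(N−2), let α, β ∈ (1,2] satisfy α + β = 2*, and let μ₁, μ₂ > 0. Then there exists λ* < 0 such that for every λ < λ* there exist no real numbers s, t > 0 satisfying simultaneously μ₁ s^{2*−2} + λ α s^{α−2} t^{β} = 1 and μ₂ t^{2*−2} + λ β s^{α} t^{β−2} = 1. -/
private lemma key_aux (α β μ s t lam : ℝ) (hβ : 0 < β)
    (hs : 0 < s) (ht : 0 < t) (hμ : 0 < μ) (hlam : μ < -lam * α)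
    (heq : μ * s ^ (α + β - 2) + lam * α * s ^ (α - 2) * t ^ β = 1) : t < s := by
  have hrw : α + β - 2 = β + (α - 2) := by ring
  rw [hrw, Real.rpow_add hs] at heq
  have hA : (0:ℝ) < s ^ (α - 2) := Real.rpow_pos_of_pos hs _
  have hB : (0:ℝ) < s ^ β := Real.rpow_pos_of_pos hs _
  have hC : (0:ℝ) < t ^ β := Real.rpow_pos_of_pos ht _
  have hBC : t ^ β < s ^ β := by
    nlinarith [mul_lt_mul_of_pos_right hlam (mul_pos hA hC), mul_pos hμ hA, mul_pos hA hC]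
  by_contra h
  push_neg at h
  exact absurd (Real.rpow_le_rpow hs.le h hβ.le) (not_le.mpr hBC)

/-- Nonexistence of fully nontrivial synchronized solutions for
`λ` sufficiently negative (Proposition 2.3 / Theorem 1.1(c)). -/
theorem statement0 (N : ℕ) (hN : 4 ≤ N) (α β μ₁ μ₂ : ℝ)
    (hα1 : 1 < α) (hα2 : α ≤ 2) (hβ1 : 1 < β) (hβ2 : β ≤ 2)
    (hαβ : α + β = 2 * (N : ℝ) / ((N : ℝ) - 2))
    (hμ₁ : 0 < μ₁) (hμ₂ : 0 < μ₂) :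
    ∃ lamStar : ℝ, lamStar < 0 ∧ ∀ lam : ℝ, lam < lamStar →
      ¬ ∃ s t : ℝ, 0 < s ∧ 0 < t ∧
        μ₁ * s ^ (2 * (N : ℝ) / ((N : ℝ) - 2) - 2) + lam * α * s ^ (α - 2) * t ^ β = 1 ∧
        μ₂ * t ^ (2 * (N : ℝ) / ((N : ℝ) - 2) - 2) + lam * β * s ^ α * t ^ (β - 2) = 1 := by
  have hα0 : (0:ℝ) < α := by linarith
  have hβ0 : (0:ℝ) < β := by linarith
  have hmax : (0:ℝ) < max (μ₁ / α) (μ₂ / β) :=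
    lt_of_lt_of_le (div_pos hμ₁ hα0) (le_max_left _ _)
  refine ⟨-(max (μ₁ / α) (μ₂ / β)) - 1, by linarith, ?_⟩
  intro lam hlam
  rintro ⟨s, t, hs, ht, h1, h2⟩
  have hl1 : μ₁ < -lam * α := by
    have h := le_max_left (μ₁ / α) (μ₂ / β)
    have : μ₁ / α < -lam := by linarith
    calc μ₁ = μ₁ / α * α := by field_simp
    _ < -lam * α := by exact mul_lt_mul_of_pos_right this hα0
  have hl2 : μ₂ < -lam * β := by
    have h := le_max_right (μ₁ / α) (μ₂ / β)
    have : μ₂ / β < -lam := by linarith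
    calc μ₂ = μ₂ / β * β := by field_simp
    _ < -lam * β := by exact mul_lt_mul_of_pos_right this hβ0
  rw [← hαβ] at h1 h2
  have ht_lt : t < s := key_aux α β μ₁ s t lam hβ0 hs ht hμ₁ hl1 h1
  have hs_lt : s < t := by
    refine key_aux β α μ₂ t s lam hα0 ht hs hμ₂ hl2 ?_
    rw [show β + α - 2 = α + β - 2 from by ring]
    linear_combination h2
  linarith
end

section
/- Let N ≥ 4, set 2* := 2N/(N−2), and let α, β ∈ (1,2] satisfy α + β = 2*. Let C ≥ 1 and let A, B be real numbers with A ≥ Cα and B ≥ Cβ. Then (2−2*)²·A·B − (2−2*)·(β(2−β)·A + α(2−α)·B) + αβ(2−α)(2−β) − (αβ)² ≥ 2αβ(2*−2)(C−1). -/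
/-- The determinant estimate (eq:det) from the proof of Proposition 2.1(b). -/
theorem statement2 (N : ℕ) (hN : 4 ≤ N) (α β : ℝ)
    (hα1 : 1 < α) (hα2 : α ≤ 2) (hβ1 : 1 < β) (hβ2 : β ≤ 2)
    (hαβ : α + β = 2 * (N : ℝ) / ((N : ℝ) - 2))
    (C A B : ℝ) (hC : 1 ≤ C) (hA : C * α ≤ A) (hB : C * β ≤ B) :
    2 * α * β * (2 * (N : ℝ) / ((N : ℝ) - 2) - 2) * (C - 1) ≤
      (2 - 2 * (N : ℝ) / ((N : ℝ) - 2)) ^ 2 * A * B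
        - (2 - 2 * (N : ℝ) / ((N : ℝ) - 2)) * (β * (2 - β) * A + α * (2 - α) * B)
        + α * β * (2 - α) * (2 - β) - (α * β) ^ 2 := by
  rw [← hαβ]
  have ht : (0:ℝ) < α + β - 2 := by linarith
  have hA0 : 0 ≤ A - C * α := by linarith
  have hB0 : 0 ≤ B - C * β := by linarith
  have hα0 : (0:ℝ) < α := by linarith
  have hβ0 : (0:ℝ) < β := by linarith
  have hC0 : (0:ℝ) ≤ C - 1 := by linarith
  have hA1 : 0 < A := by nlinarith
  nlinarith [    mul_nonneg (mul_nonneg (sq_nonneg (α+β-2)) (by positivity : (0:ℝ) ≤ C * β)) hA0,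
    mul_nonneg (mul_nonneg (mul_nonneg ht.le hβ0.le) (by linarith : (0:ℝ) ≤ 2 - β)) hA0,
    mul_nonneg (mul_nonneg (mul_nonneg ht.le hα0.le) (by linarith : (0:ℝ) ≤ 2 - α)) hB0,
    mul_nonneg (mul_nonneg (mul_nonneg (mul_nonneg (mul_nonneg hα0.le hβ0.le) ht.le) hC0) ht.le) (by linarith : (0:ℝ) ≤ C),
    mul_nonneg (mul_nonneg (sq_nonneg (α+β-2)) hA1.le) hB0]
end

section
/- Let p > 2, α, β > 1 with α + β = p, and a₁, a₂, b₁, b₂, d > 0. Define e(s,t) := a₁s² + a₂t² − b₁sᵖ − b₂tᵖ + d·sᵅtᵝ on V := (0,∞) × (0,∞), and assume that (1,1) is a critical point of e (both partial derivatives of e vanish at (1,1)). Then there exist real numbers 0 < r < R < ∞ and δ > 0 such that: (i) δ ≤ ∂e/∂s(r,t) and ∂e/∂s(R,t) ≤ −1 for all t ∈ [r,R]; (ii) δ ≤ ∂e/∂t(s,r) and ∂e/∂t(s,R) ≤ −1 for all s ∈ [r,R]; (iii) every critical point of e in V lies in the open square (r,R) × (r,R); and (iv) the supremum of e over V equals the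 maximum of e over Q := [r,R] × [r,R]. -/
/-!
Criticality of `(1,1)` means `b₁ p = 2 a₁ + d α` and `b₂ p = 2 a₂ + d β`, and then
`∂e/∂s (s,t) = 2 a₁ s (1 - s^(p-2)) + d α s^(α-1) (t^β - s^β)`, which is negative where
`t ≤ s` and `1 < s`; on the other hand `a₁ s ≤ ∂e/∂s (s,t)` as soon as `b₁ p s^(p-2) ≤ a₁`.
Swapping the variables together with the parameters turns `∂e/∂t` into `∂e/∂s`, so a small `r`
and a large `R` work for both partial derivatives, and every critical point has coordinates
in `(r, 1]`. Weighted AM-GM, `p s² ≤ 2 sᵖ + (p - 2)` and `p sᵅ tᵝ ≤ α sᵖ + β tᵖ`, shows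
`e ≤ e(1,1)` on the whole quadrant.
-/

open Set

/-- The function `e(s,t) = a₁s² + a₂t² − b₁sᵖ − b₂tᵖ + d sᵅ tᵝ` of the appendix. -/
noncomputable def eFun (a₁ a₂ b₁ b₂ d p α β : ℝ) (s t : ℝ) : ℝ :=
  a₁ * s ^ 2 + a₂ * t ^ 2 - b₁ * s ^ p - b₂ * t ^ p + d * s ^ α * t ^ β

/-- The partial derivative `∂e/∂s`. -/
noncomputable def eFunDS (a₁ a₂ b₁ b₂ d p α β : ℝ) (s t : ℝ) : ℝ :=
  deriv (fun s' => eFun a₁ a₂ b₁ b₂ d p α β s' t) s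

/-- The partial derivative `∂e/∂t`. -/
noncomputable def eFunDT (a₁ a₂ b₁ b₂ d p α β : ℝ) (s t : ℝ) : ℝ :=
  deriv (fun t' => eFun a₁ a₂ b₁ b₂ d p α β s t') t

open Filter Topology

theorem add_mul_rpow_mul_rpow_le {x y u v : ℝ} (hx : 0 ≤ x) (hy : 0 ≤ y) (hu : 0 ≤ u)
    (hv : 0 ≤ v) (huv : 0 < u + v) :
    (u + v) * (x ^ u * y ^ v) ≤ u * x ^ (u + v) + v * y ^ (u + v) := by
  have h := Real.geom_mean_le_arith_mean2_weighted (div_nonneg hu huv.le)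
    (div_nonneg hv huv.le) (Real.rpow_nonneg hx (u + v)) (Real.rpow_nonneg hy (u + v))
    (by field_simp)
  rw [← Real.rpow_mul hx, ← Real.rpow_mul hy, mul_div_cancel₀ _ huv.ne',
    mul_div_cancel₀ _ huv.ne'] at h
  calc (u + v) * (x ^ u * y ^ v)
      ≤ (u + v) * (u / (u + v) * x ^ (u + v) + v / (u + v) * y ^ (u + v)) :=
        mul_le_mul_of_nonneg_left h huv.le
    _ = u * x ^ (u + v) + v * y ^ (u + v) := by field_simp

theorem eventually_nhds_zero_mul_rpow_le {q : ℝ} (c a : ℝ) (hq : 0 < q) (ha : 0 < a) :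
    ∀ᶠ x in 𝓝 0, c * x ^ q ≤ a := by
  have h : Tendsto (fun x : ℝ => c * x ^ q) (𝓝 0) (𝓝 (c * 0 ^ q)) :=
    (continuousAt_const.mul (Real.continuousAt_rpow_const 0 q (Or.inr hq.le))).tendsto
  rw [Real.zero_rpow hq.ne', mul_zero] at h
  exact h.eventually (eventually_le_nhds ha)

section eFun

variable {a₁ a₂ b₁ b₂ d p α β : ℝ}

theorem eFun_swap (s t : ℝ) :
    eFun a₁ a₂ b₁ b₂ d p α β s t = eFun a₂ a₁ b₂ b₁ d p β α t s := by
  unfold eFun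
  ring

theorem eFunDT_eq_eFunDS_swap (s t : ℝ) :
    eFunDT a₁ a₂ b₁ b₂ d p α β s t = eFunDS a₂ a₁ b₂ b₁ d p β α t s := by
  simp only [eFunDT, eFunDS, eFun_swap s]

theorem hasDerivAt_eFun_fst {s : ℝ} (t : ℝ) (hs : s ≠ 0) :
    HasDerivAt (fun s' => eFun a₁ a₂ b₁ b₂ d p α β s' t)
      (2 * a₁ * s - b₁ * p * s ^ (p - 1) + d * α * s ^ (α - 1) * t ^ β) s := by
  have hsq : HasDerivAt (fun s' : ℝ => a₁ * s' ^ 2) (a₁ * (2 * s)) s := by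
    simpa using (hasDerivAt_pow 2 s).const_mul a₁
  have hp : HasDerivAt (fun s' : ℝ => b₁ * s' ^ p) (b₁ * (p * s ^ (p - 1))) s :=
    (Real.hasDerivAt_rpow_const (Or.inl hs)).const_mul b₁
  have hα : HasDerivAt (fun s' : ℝ => d * s' ^ α * t ^ β) (d * (α * s ^ (α - 1)) * t ^ β) s :=
    ((Real.hasDerivAt_rpow_const (Or.inl hs)).const_mul d).mul_const (t ^ β)
  exact ((((hsq.add_const (a₂ * t ^ 2)).sub hp).sub_const (b₂ * t ^ p)).add hα).congr_deriv
    (by ring)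

theorem eFunDS_eq {s : ℝ} (t : ℝ) (hs : s ≠ 0) :
    eFunDS a₁ a₂ b₁ b₂ d p α β s t =
      2 * a₁ * s - b₁ * p * s ^ (p - 1) + d * α * s ^ (α - 1) * t ^ β :=
  (hasDerivAt_eFun_fst t hs).deriv

theorem mul_eq_of_eFunDS_one_one (h : eFunDS a₁ a₂ b₁ b₂ d p α β 1 1 = 0) :
    b₁ * p = 2 * a₁ + d * α := by
  rw [eFunDS_eq 1 one_ne_zero] at h
  simp only [Real.one_rpow, mul_one] at h
  linarith

theorem eFunDS_eq_of_mul_eq (hc : b₁ * p = 2 * a₁ + d * α) (hαβ : α + β = p) {s : ℝ}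
    (t : ℝ) (hs : 0 < s) :
    eFunDS a₁ a₂ b₁ b₂ d p α β s t =
      2 * a₁ * s * (1 - s ^ (p - 2)) + d * α * s ^ (α - 1) * (t ^ β - s ^ β) := by
  have hp : s ^ (p - 1) = s ^ (p - 2) * s := by
    rw [← Real.rpow_add_one hs.ne']
    ring_nf
  have hαp : s ^ (α - 1) * s ^ β = s ^ (p - 1) := by
    rw [← Real.rpow_add hs, ← hαβ]
    ring_nf
  rw [eFunDS_eq t hs.ne', hc]
  linear_combination (d * α) * hαp - 2 * a₁ * hp

theorem mul_le_eFunDS (hd : 0 ≤ d) (hα : 0 ≤ α) {s t : ℝ} (hs : 0 < s) (ht : 0 ≤ t)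
    (hsmall : b₁ * p * s ^ (p - 2) ≤ a₁) :
    a₁ * s ≤ eFunDS a₁ a₂ b₁ b₂ d p α β s t := by
  have hp : b₁ * p * s ^ (p - 1) ≤ a₁ * s := by
    rw [show p - 1 = p - 2 + 1 by ring, Real.rpow_add_one hs.ne', ← mul_assoc]
    exact mul_le_mul_of_nonneg_right hsmall hs.le
  have hmixed : 0 ≤ d * α * s ^ (α - 1) * t ^ β := by positivity
  rw [eFunDS_eq t hs.ne']
  linarith

theorem eFunDS_le_of_le (hc : b₁ * p = 2 * a₁ + d * α) (hαβ : α + β = p) (hd : 0 ≤ d)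
    (hα : 0 ≤ α) (hβ : 0 ≤ β) {s t : ℝ} (hs : 0 < s) (ht : 0 ≤ t) (hts : t ≤ s) :
    eFunDS a₁ a₂ b₁ b₂ d p α β s t ≤ 2 * a₁ * s * (1 - s ^ (p - 2)) := by
  rw [eFunDS_eq_of_mul_eq hc hαβ t hs]
  exact add_le_of_nonpos_right <| mul_nonpos_of_nonneg_of_nonpos (by positivity)
    (sub_nonpos.2 (Real.rpow_le_rpow ht hts hβ))

theorem eFunDS_bounds_of_mem_Icc (hc : b₁ * p = 2 * a₁ + d * α) (hαβ : α + β = p)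
    (hd : 0 ≤ d) (hα : 0 ≤ α) (hβ : 0 ≤ β) {r R t : ℝ} (hr : 0 < r)
    (hr_small : b₁ * p * r ^ (p - 2) ≤ a₁) (hR : 2 ≤ R ^ (p - 2)) (hRa : 1 ≤ 2 * a₁ * R)
    (ht : t ∈ Icc r R) :
    a₁ * r ≤ eFunDS a₁ a₂ b₁ b₂ d p α β r t ∧ eFunDS a₁ a₂ b₁ b₂ d p α β R t ≤ -1 := by
  have ht0 : 0 ≤ t := hr.le.trans ht.1
  refine ⟨mul_le_eFunDS hd hα hr ht0 hr_small, ?_⟩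
  calc eFunDS a₁ a₂ b₁ b₂ d p α β R t
      ≤ 2 * a₁ * R * (1 - R ^ (p - 2)) :=
        eFunDS_le_of_le hc hαβ hd hα hβ (hr.trans_le (ht.1.trans ht.2)) ht0 ht.2
    _ ≤ 2 * a₁ * R * (-1) := mul_le_mul_of_nonneg_left (by linarith) (by linarith)
    _ ≤ -1 := by linarith

theorem lt_of_eFunDS_eq_zero (ha₁ : 0 < a₁) (hd : 0 ≤ d) (hα : 0 ≤ α) (hp : 0 ≤ p - 2)
    (hb : 0 ≤ b₁ * p) {r s t : ℝ} (hr_small : b₁ * p * r ^ (p - 2) ≤ a₁) (hs : 0 < s)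
    (ht : 0 ≤ t) (hcrit : eFunDS a₁ a₂ b₁ b₂ d p α β s t = 0) : r < s := by
  by_contra! hsr
  have hs_small : b₁ * p * s ^ (p - 2) ≤ a₁ :=
    (mul_le_mul_of_nonneg_left (Real.rpow_le_rpow hs.le hsr hp) hb).trans hr_small
  have := mul_le_eFunDS (β := β) (a₂ := a₂) (b₂ := b₂) hd hα hs ht hs_small
  linarith [mul_pos ha₁ hs]

theorem le_one_of_eFunDS_eq_zero (hc : b₁ * p = 2 * a₁ + d * α) (hαβ : α + β = p)
    (ha₁ : 0 < a₁) (hd : 0 ≤ d) (hα : 0 ≤ α) (hβ : 0 ≤ β) (hp : 0 < p - 2) {s t : ℝ}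
    (hs : 0 < s) (ht : 0 ≤ t) (hts : t ≤ s) (hcrit : eFunDS a₁ a₂ b₁ b₂ d p α β s t = 0) :
    s ≤ 1 := by
  have h := eFunDS_le_of_le (a₂ := a₂) (b₂ := b₂) hc hαβ hd hα hβ hs ht hts
  rw [hcrit] at h
  have hsp : s ^ (p - 2) ≤ 1 := sub_nonneg.1 (nonneg_of_mul_nonneg_right h (by positivity))
  by_contra! hs1
  exact (Real.one_lt_rpow hs1 hp).not_ge hsp

theorem le_one_of_eFunDS_eq_zero_of_eFunDT_eq_zero (hc₁ : b₁ * p = 2 * a₁ + d * α)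
    (hc₂ : b₂ * p = 2 * a₂ + d * β) (hαβ : α + β = p) (ha₁ : 0 < a₁) (ha₂ : 0 < a₂)
    (hd : 0 ≤ d) (hα : 0 ≤ α) (hβ : 0 ≤ β) (hp : 0 < p - 2) {s t : ℝ} (hs : 0 < s)
    (ht : 0 < t) (hS : eFunDS a₁ a₂ b₁ b₂ d p α β s t = 0)
    (hT : eFunDT a₁ a₂ b₁ b₂ d p α β s t = 0) : s ≤ 1 ∧ t ≤ 1 := by
  rcases le_total t s with hts | hst
  · have hs1 := le_one_of_eFunDS_eq_zero hc₁ hαβ ha₁ hd hα hβ hp hs ht.le hts hS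
    exact ⟨hs1, hts.trans hs1⟩
  · rw [eFunDT_eq_eFunDS_swap] at hT
    have ht1 := le_one_of_eFunDS_eq_zero hc₂ ((add_comm β α).trans hαβ) ha₂ hd hβ hα hp
      ht hs.le hst hT
    exact ⟨hst.trans ht1, ht1⟩

theorem mul_sq_le_two_mul_rpow_add {x : ℝ} (hx : 0 ≤ x) (hp : 2 < p) :
    p * x ^ 2 ≤ 2 * x ^ p + (p - 2) := by
  have h := add_mul_rpow_mul_rpow_le hx zero_le_one zero_le_two (sub_pos.2 hp).le
    (by linarith : (0 : ℝ) < 2 + (p - 2))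
  simpa only [add_sub_cancel, Real.one_rpow, mul_one, Real.rpow_two] using h

theorem eFun_le_eFun_one_one (hc₁ : b₁ * p = 2 * a₁ + d * α) (hc₂ : b₂ * p = 2 * a₂ + d * β)
    (hαβ : α + β = p) (ha₁ : 0 ≤ a₁) (ha₂ : 0 ≤ a₂) (hd : 0 ≤ d) (hα : 0 ≤ α) (hβ : 0 ≤ β)
    (hp : 2 < p) {s t : ℝ} (hs : 0 ≤ s) (ht : 0 ≤ t) :
    eFun a₁ a₂ b₁ b₂ d p α β s t ≤ eFun a₁ a₂ b₁ b₂ d p α β 1 1 := by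
  have hs2 := mul_le_mul_of_nonneg_left (mul_sq_le_two_mul_rpow_add hs hp) ha₁
  have ht2 := mul_le_mul_of_nonneg_left (mul_sq_le_two_mul_rpow_add ht hp) ha₂
  have hst := mul_le_mul_of_nonneg_left
    (add_mul_rpow_mul_rpow_le hs ht hα hβ (by linarith)) hd
  rw [hαβ] at hst
  refine le_of_mul_le_mul_left ?_ (by linarith : 0 < p)
  simp only [eFun, Real.one_rpow, one_pow, mul_one]
  linear_combination hs2 + ht2 + hst + (1 - s ^ p) * hc₁ + (1 - t ^ p) * hc₂ + d * hαβ

end eFun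

theorem statement3_general (a₁ a₂ b₁ b₂ d p α β : ℝ)
    (ha₁ : 0 < a₁) (ha₂ : 0 < a₂) (hd : 0 < d)
    (hp : 2 < p) (hα : 1 < α) (hβ : 1 < β) (hαβ : α + β = p)
    (hcritS : eFunDS a₁ a₂ b₁ b₂ d p α β 1 1 = 0)
    (hcritT : eFunDT a₁ a₂ b₁ b₂ d p α β 1 1 = 0) :
    ∃ r R δ : ℝ, 0 < r ∧ r < R ∧ 0 < δ ∧
      (∀ t ∈ Icc r R,
        δ ≤ eFunDS a₁ a₂ b₁ b₂ d p α β r t ∧ eFunDS a₁ a₂ b₁ b₂ d p α β R t ≤ -1) ∧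
      (∀ s ∈ Icc r R,
        δ ≤ eFunDT a₁ a₂ b₁ b₂ d p α β s r ∧ eFunDT a₁ a₂ b₁ b₂ d p α β s R ≤ -1) ∧
      (∀ s t : ℝ, 0 < s → 0 < t →
        eFunDS a₁ a₂ b₁ b₂ d p α β s t = 0 → eFunDT a₁ a₂ b₁ b₂ d p α β s t = 0 →
        s ∈ Ioo r R ∧ t ∈ Ioo r R) ∧
      (∃ s₀ ∈ Icc r R, ∃ t₀ ∈ Icc r R, ∀ s t : ℝ, 0 < s → 0 < t →
        eFun a₁ a₂ b₁ b₂ d p α β s t ≤ eFun a₁ a₂ b₁ b₂ d p α β s₀ t₀) := by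
  have hc₁ := mul_eq_of_eFunDS_one_one hcritS
  have hc₂ := mul_eq_of_eFunDS_one_one ((eFunDT_eq_eFunDS_swap 1 1).symm.trans hcritT)
  have hβα : β + α = p := (add_comm β α).trans hαβ
  have hq : 0 < p - 2 := sub_pos.2 hp
  have hα0 : 0 ≤ α := by linarith
  have hβ0 : 0 ≤ β := by linarith
  obtain ⟨r, hr, hr₁, hr₂, hr1⟩ : ∃ r > 0,
      b₁ * p * r ^ (p - 2) ≤ a₁ ∧ b₂ * p * r ^ (p - 2) ≤ a₂ ∧ r < 1 :=
    ((eventually_nhds_zero_mul_rpow_le _ _ hq ha₁).and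
      ((eventually_nhds_zero_mul_rpow_le _ _ hq ha₂).and (eventually_lt_nhds one_pos))).exists_gt
  obtain ⟨R, hR, hRa₁, hRa₂, hR1⟩ : ∃ R : ℝ,
      2 ≤ R ^ (p - 2) ∧ 1 ≤ 2 * a₁ * R ∧ 1 ≤ 2 * a₂ * R ∧ 1 < R :=
    (((tendsto_rpow_atTop hq).eventually_ge_atTop 2).and
      (((tendsto_id.const_mul_atTop (by positivity)).eventually_ge_atTop 1).and
        (((tendsto_id.const_mul_atTop (by positivity)).eventually_ge_atTop 1).and
          (eventually_gt_atTop 1)))).exists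
  have hδ₁ : min a₁ a₂ * r ≤ a₁ * r := mul_le_mul_of_nonneg_right (min_le_left _ _) hr.le
  have hδ₂ : min a₁ a₂ * r ≤ a₂ * r := mul_le_mul_of_nonneg_right (min_le_right _ _) hr.le
  refine ⟨r, R, min a₁ a₂ * r, hr, hr1.trans hR1, by positivity, fun t ht => ?_,
    fun s hs => ?_, fun s t hs ht hS hT => ?_, 1, ⟨hr1.le, hR1.le⟩, 1, ⟨hr1.le, hR1.le⟩,
    fun s t hs ht => eFun_le_eFun_one_one hc₁ hc₂ hαβ ha₁.le ha₂.le hd.le hα0 hβ0 hp hs.le ht.le⟩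
  · obtain ⟨hlo, hhi⟩ := eFunDS_bounds_of_mem_Icc hc₁ hαβ hd.le hα0 hβ0 hr hr₁ hR hRa₁ ht
    exact ⟨hδ₁.trans hlo, hhi⟩
  · obtain ⟨hlo, hhi⟩ := eFunDS_bounds_of_mem_Icc hc₂ hβα hd.le hβ0 hα0 hr hr₂ hR hRa₂ hs
    rw [eFunDT_eq_eFunDS_swap, eFunDT_eq_eFunDS_swap]
    exact ⟨hδ₂.trans hlo, hhi⟩
  · obtain ⟨hs1, ht1⟩ := le_one_of_eFunDS_eq_zero_of_eFunDT_eq_zero hc₁ hc₂ hαβ ha₁ ha₂ hd.le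
      hα0 hβ0 hq hs ht hS hT
    rw [eFunDT_eq_eFunDS_swap] at hT
    exact ⟨⟨lt_of_eFunDS_eq_zero ha₁ hd.le hα0 hq.le (hc₁ ▸ by positivity) hr₁ hs ht.le hS,
        hs1.trans_lt hR1⟩,
      ⟨lt_of_eFunDS_eq_zero ha₂ hd.le hβ0 hq.le (hc₂ ▸ by positivity) hr₂ ht hs.le hT,
        ht1.trans_lt hR1⟩⟩

/-- Lemma A.1 of the appendix. -/
theorem statement3 (a₁ a₂ b₁ b₂ d p α β : ℝ)
    (ha₁ : 0 < a₁) (ha₂ : 0 < a₂) (hb₁ : 0 < b₁) (hb₂ : 0 < b₂) (hd : 0 < d)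
    (hp : 2 < p) (hα : 1 < α) (hβ : 1 < β) (hαβ : α + β = p)
    (hcritS : eFunDS a₁ a₂ b₁ b₂ d p α β 1 1 = 0)
    (hcritT : eFunDT a₁ a₂ b₁ b₂ d p α β 1 1 = 0) :
    ∃ r R δ : ℝ, 0 < r ∧ r < R ∧ 0 < δ ∧
      (∀ t ∈ Icc r R,
        δ ≤ eFunDS a₁ a₂ b₁ b₂ d p α β r t ∧ eFunDS a₁ a₂ b₁ b₂ d p α β R t ≤ -1) ∧
      (∀ s ∈ Icc r R,
        δ ≤ eFunDT a₁ a₂ b₁ b₂ d p α β s r ∧ eFunDT a₁ a₂ b₁ b₂ d p α β s R ≤ -1) ∧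
      (∀ s t : ℝ, 0 < s → 0 < t →
        eFunDS a₁ a₂ b₁ b₂ d p α β s t = 0 → eFunDT a₁ a₂ b₁ b₂ d p α β s t = 0 →
        s ∈ Ioo r R ∧ t ∈ Ioo r R) ∧
      (∃ s₀ ∈ Icc r R, ∃ t₀ ∈ Icc r R, ∀ s t : ℝ, 0 < s → 0 < t →
        eFun a₁ a₂ b₁ b₂ d p α β s t ≤ eFun a₁ a₂ b₁ b₂ d p α β s₀ t₀) :=
  statement3_general a₁ a₂ b₁ b₂ d p α β ha₁ ha₂ hd hp hα hβ hαβ hcritS hcritT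
end

section
/- Let m, n ≥ 2, let S := {(x,y) ∈ ℝᵐ × ℝⁿ : ‖x‖² + ‖y‖² = 1} be the unit sphere of ℝᵐ × ℝⁿ, and let U₁, U₂ be nonempty connected subsets of S, open in S, invariant under the componentwise O(m) × O(n)-action (i.e., (x,y) ∈ Uᵢ implies (γ₁x, γ₂y) ∈ Uᵢ for all γ₁ ∈ O(m), γ₂ ∈ O(n)), with U₁ ∩ U₂ = ∅ and with the closure of U₁ ∪ U₂ in S equal to S. Then there exists s₀ ∈ (0,1) such that, after possibly exchanging U₁ and U₂: U₁ ∪ {(x,0) ∈ S : ‖x‖ = 1} = {(x,y) ∈ S : ‖x‖ > s₀} and U₂ ∪ {(0,y) ∈ S : ‖y‖ = 1} = {(x,y) ∈ S : ‖x‖ < s₀}; in particular these two enlarged sets are open in S, connected, O(m) × O(n)-invariant and disjoint, and the boundary in S of each of them equals {(x,y) ∈ S : ‖x‖ = s₀}. -/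
open Set

/-- The unit sphere of `ℝᵐ × ℝⁿ`, as a subset of the product. -/
def sphereSet (m n : ℕ) : Set (EuclideanSpace ℝ (Fin m) × EuclideanSpace ℝ (Fin n)) :=
  {p | ‖p.1‖ ^ 2 + ‖p.2‖ ^ 2 = 1}

/-- Invariance of a set under the componentwise `O(m) × O(n)`-action. -/
def isInvariantSet (m n : ℕ)
    (U : Set (EuclideanSpace ℝ (Fin m) × EuclideanSpace ℝ (Fin n))) : Prop :=
  ∀ p ∈ U, ∀ (γ₁ : EuclideanSpace ℝ (Fin m) ≃ₗᵢ[ℝ] EuclideanSpace ℝ (Fin m))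
    (γ₂ : EuclideanSpace ℝ (Fin n) ≃ₗᵢ[ℝ] EuclideanSpace ℝ (Fin n)),
    (γ₁ p.1, γ₂ p.2) ∈ U

/-- The conclusion of Lemma 5.2 for the ordered pair `(U₁, U₂)` and the level `s₀`:
the enlarged sets `Ũ₁ = U₁ ∪ (𝕊^{m-1} × {0})` and `Ũ₂ = U₂ ∪ ({0} × 𝕊^{n-1})` are
exactly `{p ∈ S : ‖p.1‖ > s₀}` and `{p ∈ S : ‖p.1‖ < s₀}`; in particular they are
open in `S`, connected, invariant and disjoint, and their boundary in `S` is
`{p ∈ S : ‖p.1‖ = s₀}`. -/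
def separationConclusion (m n : ℕ)
    (U₁ U₂ : Set (EuclideanSpace ℝ (Fin m) × EuclideanSpace ℝ (Fin n))) (s₀ : ℝ) : Prop :=
  (U₁ ∪ {p | ‖p.1‖ = 1 ∧ p.2 = 0} = {p ∈ sphereSet m n | s₀ < ‖p.1‖}) ∧
  (U₂ ∪ {p | ‖p.2‖ = 1 ∧ p.1 = 0} = {p ∈ sphereSet m n | ‖p.1‖ < s₀}) ∧
  IsOpen (Subtype.val ⁻¹' (U₁ ∪ {p | ‖p.1‖ = 1 ∧ p.2 = 0}) : Set ↥(sphereSet m n)) ∧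
  IsOpen (Subtype.val ⁻¹' (U₂ ∪ {p | ‖p.2‖ = 1 ∧ p.1 = 0}) : Set ↥(sphereSet m n)) ∧
  IsConnected (U₁ ∪ {p | ‖p.1‖ = 1 ∧ p.2 = 0}) ∧
  IsConnected (U₂ ∪ {p | ‖p.2‖ = 1 ∧ p.1 = 0}) ∧
  isInvariantSet m n (U₁ ∪ {p | ‖p.1‖ = 1 ∧ p.2 = 0}) ∧
  isInvariantSet m n (U₂ ∪ {p | ‖p.2‖ = 1 ∧ p.1 = 0}) ∧
  Disjoint (U₁ ∪ {p | ‖p.1‖ = 1 ∧ p.2 = 0}) (U₂ ∪ {p | ‖p.2‖ = 1 ∧ p.1 = 0}) ∧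
  frontier (Subtype.val ⁻¹' (U₁ ∪ {p | ‖p.1‖ = 1 ∧ p.2 = 0}) : Set ↥(sphereSet m n)) =
    Subtype.val ⁻¹' {p | ‖p.1‖ = s₀} ∧
  frontier (Subtype.val ⁻¹' (U₂ ∪ {p | ‖p.2‖ = 1 ∧ p.1 = 0}) : Set ↥(sphereSet m n)) =
    Subtype.val ⁻¹' {p | ‖p.1‖ = s₀}

/-!
Two points of `S` with the same `‖x‖` lie in one `O(m) × O(n)`-orbit (reflections carry `x` to
`x'` and `y` to `y'`), so an invariant `U ⊆ S` is the band of `S` over its set of levels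
`{‖x‖ | (x, y) ∈ U} ⊆ [0, 1]`. The levels of `U₁` and `U₂` are disjoint intervals, open in
`[0, 1]`, with dense union; such a pair is `[0, s₀)`, `(s₀, 1]` up to the endpoints and the
order. The bands over these are images of `𝕊^{m-1} × 𝕊^{n-1} × interval` under
`(u, v, t) ↦ (t • u, √(1 - t²) • v)`, hence connected for `m, n ≥ 2`, and every point of level
`s₀` is a limit of points of both.
-/

theorem Set.OrdConnected.forall_lt_of_disjoint {α : Type*} [LinearOrder α] {A B : Set α}
    (hA : A.OrdConnected) (hB : B.OrdConnected) (hd : Disjoint A B) {a b : α} (ha : a ∈ A)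
    (hb : b ∈ B) (hab : a < b) :
    ∀ x ∈ A, ∀ y ∈ B, x < y := by
  intro x hx y hy
  by_contra! hyx
  rcases le_or_gt a y with hay | hya
  · exact hd.ne_of_mem (hA.out ha hx ⟨hay, hyx⟩) hy rfl
  · exact hd.ne_of_mem ha (hB.out hy hb ⟨hya.le, hab.le⟩) rfl

theorem Set.OrdConnected.Ioo_subset_of_subset_closure {α : Type*} [LinearOrder α]
    [TopologicalSpace α] [OrderClosedTopology α] [DenselyOrdered α] {A : Set α}
    (hA : A.OrdConnected) {a b : α} (h : Ioo a b ⊆ closure A) : Ioo a b ⊆ A := by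
  have meets : ∀ {c d : α}, Ioo c d ⊆ Ioo a b → c < d → (A ∩ Ioo c d).Nonempty :=
    fun hsub hcd =>
      let ⟨t, ht⟩ := nonempty_Ioo.2 hcd
      (closure_inter_open_nonempty_iff isOpen_Ioo).1 ⟨t, h (hsub ht), ht⟩
  intro t ht
  obtain ⟨x, hxA, hx⟩ := meets (Ioo_subset_Ioo_right ht.2.le) ht.1
  obtain ⟨y, hyA, hy⟩ := meets (Ioo_subset_Ioo_left ht.1.le) ht.2
  exact hA.out hxA hyA ⟨hx.2.le, hy.1.le⟩

theorem Disjoint.disjoint_closure_of_isOpen_preimage_val {X : Type*} [TopologicalSpace X]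
    {K A B : Set X} (hd : Disjoint A B) (hA : IsOpen (Subtype.val ⁻¹' A : Set K))
    (hAK : A ⊆ K) (hBK : B ⊆ K) : Disjoint A (closure B) := by
  obtain ⟨V, hV, hVA⟩ := isOpen_induced_iff.1 hA
  have hAV : A ⊆ V := fun a ha =>
    show (⟨a, hAK ha⟩ : K) ∈ Subtype.val ⁻¹' V from hVA ▸ ha
  have hVB : Disjoint V B := disjoint_left.2 fun b hbV hbB =>
    hd.ne_of_mem (show (⟨b, hBK hbB⟩ : K) ∈ Subtype.val ⁻¹' A from hVA ▸ hbV) hbB rfl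
  exact (hVB.closure_right hV).mono_left hAV

theorem exists_mem_closure_inter_of_lt {A₁ A₂ : Set ℝ} (h₁ : A₁ ⊆ Icc 0 1) (h₂ : A₂ ⊆ Icc 0 1)
    (hoc₁ : A₁.OrdConnected) (hoc₂ : A₂.OrdConnected) (hd : Disjoint A₁ A₂)
    (hdense : Icc 0 1 ⊆ closure A₁ ∪ closure A₂)
    {a₁ a₂ : ℝ} (ha₁ : a₁ ∈ A₁) (ha₂ : a₂ ∈ A₂) (hlt : a₂ < a₁) :
    ∃ s ∈ closure A₁ ∩ closure A₂, A₁ ⊆ Ici s ∧ A₂ ⊆ Iic s := by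
  have hsep := hoc₂.forall_lt_of_disjoint hoc₁ hd.symm ha₂ ha₁ hlt
  have hsup : IsLUB A₂ (sSup A₂) :=
    isLUB_csSup ⟨a₂, ha₂⟩ ⟨a₁, fun x hx => (hsep x hx a₁ ha₁).le⟩
  have hinf : IsGLB A₁ (sInf A₁) :=
    isGLB_csInf ⟨a₁, ha₁⟩ ⟨a₂, fun y hy => (hsep a₂ ha₂ y hy).le⟩
  -- no gap between `A₂` and `A₁`, since their closures cover `[0, 1]`
  have hgap : sInf A₁ = sSup A₂ := by
    refine le_antisymm ?_ (hsup.2 fun x hx => hinf.2 fun y hy => (hsep x hx y hy).le)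
    by_contra! h
    have h0 : 0 ≤ sSup A₂ := (h₂ ha₂).1.trans (hsup.1 ha₂)
    have h1 : sInf A₁ ≤ 1 := (hinf.1 ha₁).trans (h₁ ha₁).2
    rcases hdense (show (sSup A₂ + sInf A₁) / 2 ∈ Icc (0 : ℝ) 1 from ⟨by linarith, by linarith⟩)
      with hc | hc
    · linarith [mem_Ici.1 (closure_minimal hinf.1 isClosed_Ici hc)]
    · linarith [mem_Iic.1 (closure_minimal hsup.1 isClosed_Iic hc)]
  rw [hgap] at hinf
  exact ⟨sSup A₂, ⟨hinf.mem_closure ⟨a₁, ha₁⟩, hsup.mem_closure ⟨a₂, ha₂⟩⟩, hinf.1, hsup.1⟩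

theorem exists_union_eq_Ioi_Iio_of_lt {A₁ A₂ : Set ℝ} (h₁ : A₁ ⊆ Icc 0 1) (h₂ : A₂ ⊆ Icc 0 1)
    (hoc₁ : A₁.OrdConnected) (hoc₂ : A₂.OrdConnected)
    (ho₁ : IsOpen (Subtype.val ⁻¹' A₁ : Set (Icc (0 : ℝ) 1)))
    (ho₂ : IsOpen (Subtype.val ⁻¹' A₂ : Set (Icc (0 : ℝ) 1)))
    (hd : Disjoint A₁ A₂) (hdense : Icc 0 1 ⊆ closure A₁ ∪ closure A₂)
    {a₁ a₂ : ℝ} (ha₁ : a₁ ∈ A₁) (ha₂ : a₂ ∈ A₂) (hlt : a₂ < a₁) :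
    ∃ s₀ ∈ Ioo (0 : ℝ) 1, A₁ ∪ {1} = Ioi s₀ ∩ Icc 0 1 ∧ A₂ ∪ {0} = Iio s₀ ∩ Icc 0 1 := by
  obtain ⟨s₀, ⟨hs₀₁, hs₀₂⟩, hA₁, hA₂⟩ :=
    exists_mem_closure_inter_of_lt h₁ h₂ hoc₁ hoc₂ hd hdense ha₁ ha₂ hlt
  have hcl₁ : closure A₁ ⊆ Ici s₀ := closure_minimal hA₁ isClosed_Ici
  have hcl₂ : closure A₂ ⊆ Iic s₀ := closure_minimal hA₂ isClosed_Iic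
  have hA₁ : A₁ ⊆ Ioi s₀ := fun x hx => (hA₁ hx).lt_of_ne fun h =>
    (hd.disjoint_closure_of_isOpen_preimage_val ho₁ h₁ h₂).ne_of_mem hx hs₀₂ h.symm
  have hA₂ : A₂ ⊆ Iio s₀ := fun x hx => (hA₂ hx).lt_of_ne fun h =>
    (hd.symm.disjoint_closure_of_isOpen_preimage_val ho₂ h₂ h₁).ne_of_mem hx hs₀₁ h
  have hs₀ : s₀ ∈ Ioo (0 : ℝ) 1 :=
    ⟨(h₂ ha₂).1.trans_lt (hA₂ ha₂), (hA₁ ha₁).trans_le (h₁ ha₁).2⟩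
  have hIoo₁ : Ioo s₀ 1 ⊆ A₁ := hoc₁.Ioo_subset_of_subset_closure fun t ht =>
    (hdense ⟨hs₀.1.le.trans ht.1.le, ht.2.le⟩).resolve_right fun hc => (hcl₂ hc).not_gt ht.1
  have hIoo₂ : Ioo 0 s₀ ⊆ A₂ := hoc₂.Ioo_subset_of_subset_closure fun t ht =>
    (hdense ⟨ht.1.le, ht.2.le.trans hs₀.2.le⟩).resolve_left fun hc => (hcl₁ hc).not_gt ht.2
  refine ⟨s₀, hs₀, Subset.antisymm ?_ ?_, Subset.antisymm ?_ ?_⟩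
  · exact union_subset (fun x hx => ⟨hA₁ hx, h₁ hx⟩)
      (singleton_subset_iff.2 ⟨hs₀.2, zero_le_one, le_rfl⟩)
  · rintro t ⟨hst, -, ht1⟩
    rcases ht1.lt_or_eq with ht1 | rfl
    exacts [Or.inl (hIoo₁ ⟨hst, ht1⟩), Or.inr rfl]
  · exact union_subset (fun x hx => ⟨hA₂ hx, h₂ hx⟩)
      (singleton_subset_iff.2 ⟨hs₀.1, le_rfl, zero_le_one⟩)
  · rintro t ⟨hts, ht0, -⟩
    rcases ht0.lt_or_eq with ht0 | rfl
    exacts [Or.inl (hIoo₂ ⟨ht0, hts⟩), Or.inr rfl]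

theorem exists_union_eq_Ioi_Iio {A₁ A₂ : Set ℝ} (h₁ : A₁ ⊆ Icc 0 1) (h₂ : A₂ ⊆ Icc 0 1)
    (hne₁ : A₁.Nonempty) (hne₂ : A₂.Nonempty) (hoc₁ : A₁.OrdConnected) (hoc₂ : A₂.OrdConnected)
    (ho₁ : IsOpen (Subtype.val ⁻¹' A₁ : Set (Icc (0 : ℝ) 1)))
    (ho₂ : IsOpen (Subtype.val ⁻¹' A₂ : Set (Icc (0 : ℝ) 1)))
    (hd : Disjoint A₁ A₂) (hdense : Icc 0 1 ⊆ closure A₁ ∪ closure A₂) :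
    ∃ s₀ ∈ Ioo (0 : ℝ) 1,
      (A₁ ∪ {1} = Ioi s₀ ∩ Icc 0 1 ∧ A₂ ∪ {0} = Iio s₀ ∩ Icc 0 1) ∨
      (A₂ ∪ {1} = Ioi s₀ ∩ Icc 0 1 ∧ A₁ ∪ {0} = Iio s₀ ∩ Icc 0 1) := by
  obtain ⟨a₁, ha₁⟩ := hne₁
  obtain ⟨a₂, ha₂⟩ := hne₂
  rcases (hd.ne_of_mem ha₁ ha₂).lt_or_gt with hlt | hlt
  · obtain ⟨s₀, hs₀, h⟩ := exists_union_eq_Ioi_Iio_of_lt h₂ h₁ hoc₂ hoc₁ ho₂ ho₁ hd.symm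
      (union_comm (closure A₁) _ ▸ hdense) ha₂ ha₁ hlt
    exact ⟨s₀, hs₀, .inr h⟩
  · obtain ⟨s₀, hs₀, h⟩ :=
      exists_union_eq_Ioi_Iio_of_lt h₁ h₂ hoc₁ hoc₂ ho₁ ho₂ hd hdense ha₁ ha₂ hlt
    exact ⟨s₀, hs₀, .inl h⟩

section Sphere

variable {m n : ℕ}

theorem norm_fst_le_one {p : EuclideanSpace ℝ (Fin m) × EuclideanSpace ℝ (Fin n)}
    (hp : p ∈ sphereSet m n) : ‖p.1‖ ≤ 1 := by
  have hp' : ‖p.1‖ ^ 2 + ‖p.2‖ ^ 2 = 1 := hp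
  nlinarith [norm_nonneg p.1, sq_nonneg ‖p.2‖]

theorem norm_snd_eq_of_norm_fst_eq {p q : EuclideanSpace ℝ (Fin m) × EuclideanSpace ℝ (Fin n)}
    (hp : p ∈ sphereSet m n) (hq : q ∈ sphereSet m n) (h : ‖p.1‖ = ‖q.1‖) : ‖p.2‖ = ‖q.2‖ := by
  have hp' : ‖p.1‖ ^ 2 + ‖p.2‖ ^ 2 = 1 := hp
  have hq' : ‖q.1‖ ^ 2 + ‖q.2‖ ^ 2 = 1 := hq
  refine (pow_left_inj₀ (norm_nonneg _) (norm_nonneg _) two_ne_zero).1 ?_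
  rw [h] at hp'
  linarith

theorem isInvariantSet.mem_of_norm_fst_eq
    {U : Set (EuclideanSpace ℝ (Fin m) × EuclideanSpace ℝ (Fin n))} (hU : isInvariantSet m n U)
    {p q : EuclideanSpace ℝ (Fin m) × EuclideanSpace ℝ (Fin n)} (hp : p ∈ sphereSet m n)
    (hq : q ∈ sphereSet m n) (h : ‖p.1‖ = ‖q.1‖) (hpU : p ∈ U) : q ∈ U := by
  have := hU p hpU (ℝ ∙ (p.1 - q.1))ᗮ.reflection (ℝ ∙ (p.2 - q.2))ᗮ.reflection
  rwa [Submodule.reflection_sub h,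
    Submodule.reflection_sub (norm_snd_eq_of_norm_fst_eq hp hq h)] at this

variable (m n) in
def sphereBand (I : Set ℝ) : Set (EuclideanSpace ℝ (Fin m) × EuclideanSpace ℝ (Fin n)) :=
  {p ∈ sphereSet m n | ‖p.1‖ ∈ I}

def levels (U : Set (EuclideanSpace ℝ (Fin m) × EuclideanSpace ℝ (Fin n))) : Set ℝ :=
  (fun p => ‖p.1‖) '' U

theorem levels_subset_Icc {U : Set (EuclideanSpace ℝ (Fin m) × EuclideanSpace ℝ (Fin n))}
    (hU : U ⊆ sphereSet m n) : levels U ⊆ Icc 0 1 := by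
  rintro _ ⟨p, hp, rfl⟩
  exact ⟨norm_nonneg _, norm_fst_le_one (hU hp)⟩

theorem isInvariantSet.eq_sphereBand_levels
    {U : Set (EuclideanSpace ℝ (Fin m) × EuclideanSpace ℝ (Fin n))} (hU : isInvariantSet m n U)
    (hUS : U ⊆ sphereSet m n) : U = sphereBand m n (levels U) := by
  refine Subset.antisymm (fun p hp => ⟨hUS hp, p, hp, rfl⟩) ?_
  rintro p ⟨hpS, q, hqU, hqp⟩
  exact hU.mem_of_norm_fst_eq (hUS hqU) hpS hqp hqU

theorem disjoint_levels {U₁ U₂ : Set (EuclideanSpace ℝ (Fin m) × EuclideanSpace ℝ (Fin n))}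
    (hU₂ : isInvariantSet m n U₂) (hU₁S : U₁ ⊆ sphereSet m n) (hU₂S : U₂ ⊆ sphereSet m n)
    (hd : Disjoint U₁ U₂) : Disjoint (levels U₁) (levels U₂) := by
  refine disjoint_left.2 ?_
  rintro _ ⟨p, hp, rfl⟩ hp₂
  have hpU₂ : p ∈ sphereBand m n (levels U₂) := ⟨hU₁S hp, hp₂⟩
  rw [← hU₂.eq_sphereBand_levels hU₂S] at hpU₂
  exact hd.ne_of_mem hp hpU₂ rfl

theorem sphereBand_union (I J : Set ℝ) :
    sphereBand m n (I ∪ J) = sphereBand m n I ∪ sphereBand m n J := by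
  ext p
  simp only [sphereBand, mem_ofPred_eq, mem_union, and_or_left]

theorem sphereBand_inter_Icc (I : Set ℝ) : sphereBand m n (I ∩ Icc 0 1) = sphereBand m n I := by
  ext p
  simp only [sphereBand, mem_ofPred_eq, mem_inter_iff, mem_Icc]
  exact ⟨fun h => ⟨h.1, h.2.1⟩, fun h => ⟨h.1, h.2, norm_nonneg _, norm_fst_le_one h.1⟩⟩

theorem sphereBand_singleton_one : sphereBand m n {1} = {p | ‖p.1‖ = 1 ∧ p.2 = 0} := by
  ext p
  simp only [sphereBand, sphereSet, mem_ofPred_eq, mem_singleton_iff]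
  constructor
  · rintro ⟨hp, h1⟩
    refine ⟨h1, norm_eq_zero.1 (pow_eq_zero_iff two_ne_zero |>.1 ?_)⟩
    rw [h1] at hp
    linarith
  · rintro ⟨h1, h2⟩
    simp [h1, h2]

theorem sphereBand_singleton_zero : sphereBand m n {0} = {p | ‖p.2‖ = 1 ∧ p.1 = 0} := by
  ext p
  simp only [sphereBand, sphereSet, mem_ofPred_eq, mem_singleton_iff, norm_eq_zero]
  constructor
  · rintro ⟨hp, h1⟩
    refine ⟨?_, h1⟩
    rw [h1, norm_zero] at hp
    nlinarith [norm_nonneg p.2]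
  · rintro ⟨h2, h1⟩
    simp [h1, h2]

theorem isInvariantSet_sphereBand (I : Set ℝ) : isInvariantSet m n (sphereBand m n I) := by
  rintro p ⟨hp, hpI⟩ γ₁ γ₂
  refine ⟨?_, ?_⟩
  · simpa only [sphereSet, mem_ofPred_eq, LinearIsometryEquiv.norm_map] using hp
  · simpa only [LinearIsometryEquiv.norm_map] using hpI

theorem disjoint_sphereBand {I J : Set ℝ} (h : Disjoint I J) :
    Disjoint (sphereBand m n I) (sphereBand m n J) :=
  disjoint_left.2 fun _ hI hJ => h.ne_of_mem hI.2 hJ.2 rfl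

theorem preimage_val_sphereBand (I : Set ℝ) :
    (Subtype.val ⁻¹' sphereBand m n I : Set (sphereSet m n)) =
      (fun x : sphereSet m n => ‖x.1.1‖) ⁻¹' I := by
  ext x
  simp [sphereBand]

theorem isOpen_sphereBand {I : Set ℝ} (hI : IsOpen I) :
    IsOpen (Subtype.val ⁻¹' sphereBand m n I : Set (sphereSet m n)) := by
  rw [preimage_val_sphereBand]
  exact hI.preimage (by fun_prop)

noncomputable def spherePoint (u : EuclideanSpace ℝ (Fin m)) (v : EuclideanSpace ℝ (Fin n))
    (t : ℝ) : EuclideanSpace ℝ (Fin m) × EuclideanSpace ℝ (Fin n) :=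
  (t • u, √(1 - t ^ 2) • v)

theorem continuous_spherePoint :
    Continuous fun z : EuclideanSpace ℝ (Fin m) × EuclideanSpace ℝ (Fin n) × ℝ =>
      spherePoint z.1 z.2.1 z.2.2 := by
  unfold spherePoint
  fun_prop

theorem norm_fst_spherePoint {u : EuclideanSpace ℝ (Fin m)} (hu : ‖u‖ = 1)
    (v : EuclideanSpace ℝ (Fin n)) {t : ℝ} (ht : 0 ≤ t) : ‖(spherePoint u v t).1‖ = t := by
  simp [spherePoint, norm_smul, hu, abs_of_nonneg ht]

theorem spherePoint_mem_sphereBand {u : EuclideanSpace ℝ (Fin m)} {v : EuclideanSpace ℝ (Fin n)}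
    (hu : ‖u‖ = 1) (hv : ‖v‖ = 1) {I : Set ℝ} (hI : I ⊆ Icc 0 1) {t : ℝ} (ht : t ∈ I) :
    spherePoint u v t ∈ sphereBand m n I := by
  obtain ⟨ht0, ht1⟩ := hI ht
  have hfst := norm_fst_spherePoint hu v ht0
  refine ⟨?_, by rw [hfst]; exact ht⟩
  show ‖(spherePoint u v t).1‖ ^ 2 + ‖(spherePoint u v t).2‖ ^ 2 = 1
  rw [hfst]
  simp only [spherePoint, norm_smul, hv, mul_one, Real.norm_eq_abs, sq_abs]
  rw [Real.sq_sqrt (by nlinarith)]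
  ring

theorem exists_spherePoint_eq [NeZero m] [NeZero n]
    {p : EuclideanSpace ℝ (Fin m) × EuclideanSpace ℝ (Fin n)} (hp : p ∈ sphereSet m n) :
    ∃ u v, ‖u‖ = 1 ∧ ‖v‖ = 1 ∧ spherePoint u v ‖p.1‖ = p := by
  have polar : ∀ {k : ℕ} [NeZero k] (x : EuclideanSpace ℝ (Fin k)),
      ∃ u : EuclideanSpace ℝ (Fin k), ‖u‖ = 1 ∧ ‖x‖ • u = x := by
    intro k _ x
    rcases eq_or_ne x 0 with rfl | hx
    · obtain ⟨u, hu⟩ := exists_norm_eq (EuclideanSpace ℝ (Fin k)) zero_le_one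
      exact ⟨u, hu, by simp⟩
    · exact ⟨‖x‖⁻¹ • x, by simp [norm_smul, hx], by simp [smul_smul, hx]⟩
  obtain ⟨u, hu, hpu⟩ := polar p.1
  obtain ⟨v, hv, hpv⟩ := polar p.2
  refine ⟨u, v, hu, hv, Prod.ext hpu ?_⟩
  have hp' : ‖p.1‖ ^ 2 + ‖p.2‖ ^ 2 = 1 := hp
  show √(1 - ‖p.1‖ ^ 2) • v = p.2
  rw [show 1 - ‖p.1‖ ^ 2 = ‖p.2‖ ^ 2 by linarith, Real.sqrt_sq (norm_nonneg _)]
  exact hpv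

theorem sphereBand_eq_image [NeZero m] [NeZero n] {I : Set ℝ} (hI : I ⊆ Icc 0 1) :
    sphereBand m n I = (fun z : EuclideanSpace ℝ (Fin m) × EuclideanSpace ℝ (Fin n) × ℝ =>
      spherePoint z.1 z.2.1 z.2.2) '' (Metric.sphere 0 1 ×ˢ Metric.sphere 0 1 ×ˢ I) := by
  refine Subset.antisymm ?_ ?_
  · rintro p ⟨hp, hpI⟩
    obtain ⟨u, v, hu, hv, hpuv⟩ := exists_spherePoint_eq hp
    exact ⟨(u, v, ‖p.1‖), ⟨by simpa using hu, by simpa using hv, hpI⟩, hpuv⟩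
  · rintro _ ⟨⟨u, v, t⟩, ⟨hu, hv, ht⟩, rfl⟩
    exact spherePoint_mem_sphereBand (by simpa using hu) (by simpa using hv) hI ht

theorem one_lt_rank_euclideanSpace {k : ℕ} (hk : 2 ≤ k) :
    1 < Module.rank ℝ (EuclideanSpace ℝ (Fin k)) := by
  rw [← Module.finrank_eq_rank, finrank_euclideanSpace_fin]
  exact_mod_cast hk

theorem isConnected_sphereBand (hm : 2 ≤ m) (hn : 2 ≤ n) {I : Set ℝ} (hI : I.OrdConnected)
    (hne : (I ∩ Icc 0 1).Nonempty) : IsConnected (sphereBand m n I) := by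
  have : NeZero m := ⟨by omega⟩
  have : NeZero n := ⟨by omega⟩
  rw [← sphereBand_inter_Icc, sphereBand_eq_image inter_subset_right]
  exact ((isConnected_sphere (one_lt_rank_euclideanSpace hm) 0 zero_le_one).prod
    ((isConnected_sphere (one_lt_rank_euclideanSpace hn) 0 zero_le_one).prod
      ⟨hne, (hI.inter ordConnected_Icc).isPreconnected⟩)).image _
    continuous_spherePoint.continuousOn

theorem frontier_sphereBand [NeZero m] [NeZero n] {I : Set ℝ} {s : ℝ} (hI : IsOpen I)
    (hfr : frontier I = {s}) (hs : s ∈ closure (I ∩ Icc 0 1)) :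
    frontier (Subtype.val ⁻¹' sphereBand m n I : Set (sphereSet m n)) =
      Subtype.val ⁻¹' {p | ‖p.1‖ = s} := by
  refine Subset.antisymm ?_ fun x hx => ?_
  · rw [preimage_val_sphereBand]
    refine (continuous_subtype_val.fst.norm.frontier_preimage_subset I).trans ?_
    rw [hfr]
    exact subset_rfl
  have hx' : ‖x.1.1‖ = s := hx
  have hsI : s ∉ I := by
    have : s ∈ closure I \ I := hI.frontier_eq ▸ hfr.symm.subset (mem_singleton s)
    exact this.2
  rw [(isOpen_sphereBand hI).frontier_eq]
  refine ⟨?_, fun hxI => hsI (hx' ▸ hxI.2)⟩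
  obtain ⟨u, v, hu, hv, hxuv⟩ := exists_spherePoint_eq x.2
  rw [closure_subtype, Subtype.image_preimage_coe, ← hxuv, hx']
  refine map_mem_closure (f := spherePoint u v) (by unfold spherePoint; fun_prop) hs
    fun t ht => ?_
  have := spherePoint_mem_sphereBand hu hv inter_subset_right ht
  exact ⟨this.1, (sphereBand_inter_Icc I ▸ this)⟩

end Sphere

section Levels

variable {m n : ℕ} [NeZero m] [NeZero n]

theorem levels_sphereSet : levels (sphereSet m n) = Icc 0 1 := by
  refine (levels_subset_Icc subset_rfl).antisymm fun t ht => ?_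
  obtain ⟨u, hu⟩ := exists_norm_eq (EuclideanSpace ℝ (Fin m)) zero_le_one
  obtain ⟨v, hv⟩ := exists_norm_eq (EuclideanSpace ℝ (Fin n)) zero_le_one
  exact ⟨_, (spherePoint_mem_sphereBand hu hv subset_rfl ht).1, norm_fst_spherePoint hu v ht.1⟩

theorem Icc_subset_closure_levels
    {U₁ U₂ : Set (EuclideanSpace ℝ (Fin m) × EuclideanSpace ℝ (Fin n))}
    (hdense : sphereSet m n ⊆ closure (U₁ ∪ U₂)) :
    Icc 0 1 ⊆ closure (levels U₁) ∪ closure (levels U₂) :=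
  calc Icc 0 1 = levels (sphereSet m n) := levels_sphereSet.symm
    _ ⊆ levels (closure (U₁ ∪ U₂)) := image_mono hdense
    _ ⊆ closure (levels (U₁ ∪ U₂)) := image_closure_subset_closure_image (by fun_prop)
    _ = closure (levels U₁) ∪ closure (levels U₂) := by rw [levels, image_union, closure_union]; rfl

-- `t ↦ spherePoint u v t` is a continuous section of the level map over `[0, 1]`.
theorem isOpen_levels {U : Set (EuclideanSpace ℝ (Fin m) × EuclideanSpace ℝ (Fin n))}
    (hU : isInvariantSet m n U) (hUS : U ⊆ sphereSet m n)
    (hUo : IsOpen (Subtype.val ⁻¹' U : Set (sphereSet m n))) :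
    IsOpen (Subtype.val ⁻¹' levels U : Set (Icc (0 : ℝ) 1)) := by
  obtain ⟨u, hu⟩ := exists_norm_eq (EuclideanSpace ℝ (Fin m)) zero_le_one
  obtain ⟨v, hv⟩ := exists_norm_eq (EuclideanSpace ℝ (Fin n)) zero_le_one
  let g : Icc (0 : ℝ) 1 → sphereSet m n := fun t =>
    ⟨spherePoint u v t, (spherePoint_mem_sphereBand hu hv subset_rfl t.2).1⟩
  have hg : Continuous g := by
    unfold g spherePoint
    fun_prop
  convert hUo.preimage hg using 1
  ext t
  change _ ↔ spherePoint u v t ∈ U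
  conv_rhs => rw [hU.eq_sphereBand_levels hUS]
  rw [sphereBand, mem_ofPred_eq, norm_fst_spherePoint hu v t.2.1]
  exact (and_iff_right (g t).2).symm

end Levels

theorem separationConclusion_of_levels {m n : ℕ} (hm : 2 ≤ m) (hn : 2 ≤ n)
    {U₁ U₂ : Set (EuclideanSpace ℝ (Fin m) × EuclideanSpace ℝ (Fin n))}
    (hU₁ : isInvariantSet m n U₁) (hU₂ : isInvariantSet m n U₂)
    (hU₁S : U₁ ⊆ sphereSet m n) (hU₂S : U₂ ⊆ sphereSet m n) {s₀ : ℝ} (hs₀ : s₀ ∈ Ioo (0 : ℝ) 1)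
    (h₁ : levels U₁ ∪ {1} = Ioi s₀ ∩ Icc 0 1) (h₂ : levels U₂ ∪ {0} = Iio s₀ ∩ Icc 0 1) :
    separationConclusion m n U₁ U₂ s₀ := by
  have : NeZero m := ⟨by omega⟩
  have : NeZero n := ⟨by omega⟩
  have hT₁ : U₁ ∪ {p | ‖p.1‖ = 1 ∧ p.2 = 0} = sphereBand m n (Ioi s₀) := by
    rw [hU₁.eq_sphereBand_levels hU₁S, ← sphereBand_singleton_one, ← sphereBand_union, h₁,
      sphereBand_inter_Icc]
  have hT₂ : U₂ ∪ {p | ‖p.2‖ = 1 ∧ p.1 = 0} = sphereBand m n (Iio s₀) := by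
    rw [hU₂.eq_sphereBand_levels hU₂S, ← sphereBand_singleton_zero, ← sphereBand_union, h₂,
      sphereBand_inter_Icc]
  have hsub₁ : Ioo s₀ 1 ⊆ Ioi s₀ ∩ Icc 0 1 := fun t ht =>
    ⟨ht.1, hs₀.1.le.trans ht.1.le, ht.2.le⟩
  have hsub₂ : Ioo 0 s₀ ⊆ Iio s₀ ∩ Icc 0 1 := fun t ht =>
    ⟨ht.2, ht.1.le, ht.2.le.trans hs₀.2.le⟩
  have hcl₁ := closure_mono hsub₁ (closure_Ioo hs₀.2.ne ▸ left_mem_Icc.2 hs₀.2.le)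
  have hcl₂ := closure_mono hsub₂ (closure_Ioo hs₀.1.ne ▸ right_mem_Icc.2 hs₀.1.le)
  unfold separationConclusion
  rw [hT₁, hT₂]
  exact ⟨rfl, rfl, isOpen_sphereBand isOpen_Ioi, isOpen_sphereBand isOpen_Iio,
    isConnected_sphereBand hm hn ordConnected_Ioi ⟨1, hs₀.2, zero_le_one, le_rfl⟩,
    isConnected_sphereBand hm hn ordConnected_Iio ⟨0, hs₀.1, le_rfl, zero_le_one⟩,
    isInvariantSet_sphereBand _, isInvariantSet_sphereBand _,
    disjoint_sphereBand Ioi_disjoint_Iio_same,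
    frontier_sphereBand isOpen_Ioi frontier_Ioi hcl₁,
    frontier_sphereBand isOpen_Iio frontier_Iio hcl₂⟩

/-- Lemma 5.2, describing a separation of the sphere into two
invariant connected open pieces. -/
theorem statement8 (m n : ℕ) (hm : 2 ≤ m) (hn : 2 ≤ n)
    (U₁ U₂ : Set (EuclideanSpace ℝ (Fin m) × EuclideanSpace ℝ (Fin n)))
    (hU₁S : U₁ ⊆ sphereSet m n) (hU₂S : U₂ ⊆ sphereSet m n)
    (hU₁conn : IsConnected U₁) (hU₂conn : IsConnected U₂)
    (hU₁open : IsOpen (Subtype.val ⁻¹' U₁ : Set ↥(sphereSet m n)))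
    (hU₂open : IsOpen (Subtype.val ⁻¹' U₂ : Set ↥(sphereSet m n)))
    (hU₁inv : isInvariantSet m n U₁) (hU₂inv : isInvariantSet m n U₂)
    (hdisj : Disjoint U₁ U₂)
    (hdense : sphereSet m n ⊆ closure (U₁ ∪ U₂)) :
    ∃ s₀ ∈ Ioo (0 : ℝ) 1,
      separationConclusion m n U₁ U₂ s₀ ∨ separationConclusion m n U₂ U₁ s₀ := by
  have : NeZero m := ⟨by omega⟩
  have : NeZero n := ⟨by omega⟩
  obtain ⟨s₀, hs₀, h | h⟩ := exists_union_eq_Ioi_Iio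
    (levels_subset_Icc hU₁S) (levels_subset_Icc hU₂S)
    (hU₁conn.nonempty.image _) (hU₂conn.nonempty.image _)
    (hU₁conn.isPreconnected.image (fun p => ‖p.1‖) (by fun_prop)).ordConnected
    (hU₂conn.isPreconnected.image (fun p => ‖p.1‖) (by fun_prop)).ordConnected
    (isOpen_levels hU₁inv hU₁S hU₁open) (isOpen_levels hU₂inv hU₂S hU₂open)
    (disjoint_levels hU₂inv hU₁S hU₂S hdisj) (Icc_subset_closure_levels hdense)
  · exact ⟨s₀, hs₀, .inl (separationConclusion_of_levels hm hn hU₁inv hU₂inv hU₁S hU₂S hs₀ h.1 h.2)⟩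
  · exact ⟨s₀, hs₀, .inr (separationConclusion_of_levels hm hn hU₂inv hU₁inv hU₂S hU₁S hs₀ h.1 h.2)⟩
end
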